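/- Let ⟨T, Σ, C₁ ⊑ C₂⟩ with Σ = N_C be an EL TBox abduction problem with T in normal form and ⊤-free, Φ its first-order translation and Φ_p its presaturation. Then every clause in PI^{g+}_{N_C}(Φ) has a resolution derivation from Φ_p in which no clause of the form ¬r(x,y) ∨ ¬A₁(y) ∨ A₂(x) is used. -/
import Mathlib


namespace ELAbd

/-! ### EL concepts, TBoxes, semantics -/

inductive ELConcept : Type where
  | top : ELConcept
  | atom : ℕ → ELConcept
  | conj : ELConcept → ELConcept → ELConcept
  | ex : ℕ → ELConcept → ELConcept
deriving DecidableEq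

abbrev CI := ELConcept × ELConcept
abbrev TBox := Finset CI

structure Interp (α : Type) where
  conc : ℕ → Set α
  role : ℕ → Set (α × α)

def ELConcept.sem {α : Type} (I : Interp α) : ELConcept → Set α
  | .top => Set.univ
  | .atom A => I.conc A
  | .conj C D => C.sem I ∩ D.sem I
  | .ex r C => {d | ∃ e, (d, e) ∈ I.role r ∧ e ∈ C.sem I}

def Models {α : Type} (I : Interp α) (T : TBox) : Prop :=
  ∀ ci ∈ T, ci.1.sem I ⊆ ci.2.sem I

def Entails (T : TBox) (C D : ELConcept) : Prop :=
  ∀ (α : Type) (I : Interp α), Models I T → C.sem I ⊆ D.sem I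

def EntailsCI (T : TBox) (ci : CI) : Prop := Entails T ci.1 ci.2

def TEntails (T T' : TBox) : Prop :=
  ∀ (α : Type) (I : Interp α), Models I T → Models I T'

def TEquiv (T T' : TBox) : Prop := TEntails T T' ∧ TEntails T' T

/-- Equality of concepts modulo the convention that conjunctions are read as
sets (associativity, commutativity, idempotence, `⊤` as empty conjunction). -/
inductive CEq : ELConcept → ELConcept → Prop
  | refl (C) : CEq C C
  | symm {C D} : CEq C D → CEq D C
  | trans {C D E} : CEq C D → CEq D E → CEq C E
  | congr_conj {C C' D D'} : CEq C C' → CEq D D' → CEq (.conj C D) (.conj C' D')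
  | congr_ex {r C C'} : CEq C C' → CEq (.ex r C) (.ex r C')
  | comm (C D) : CEq (.conj C D) (.conj D C)
  | assoc (C D E) : CEq (.conj (.conj C D) E) (.conj C (.conj D E))
  | idem (C) : CEq (.conj C C) C
  | top_unit (C) : CEq (.conj .top C) C

/-- The relation `≼⊓` on concepts. -/
inductive PrecSq : ELConcept → ELConcept → Prop
  | refl (C) : PrecSq C C
  | conjL {C D'} (D'') : PrecSq C D' → PrecSq C (.conj D' D'')
  | ex (r) {C' D'} : PrecSq C' D' → PrecSq (.ex r C') (.ex r D')

def ELConcept.concNames : ELConcept → Set ℕ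
  | .top => ∅
  | .atom A => {A}
  | .conj C D => C.concNames ∪ D.concNames
  | .ex _ C => C.concNames

def ELConcept.roleNames : ELConcept → Set ℕ
  | .top => ∅
  | .atom _ => ∅
  | .conj C D => C.roleNames ∪ D.roleNames
  | .ex r C => {r} ∪ C.roleNames

def ELConcept.size : ELConcept → ℕ
  | .top => 1
  | .atom _ => 1
  | .conj C D => C.size + D.size + 1
  | .ex _ C => C.size + 1

def ELConcept.exCount : ELConcept → ℕ
  | .top => 0
  | .atom _ => 0
  | .conj C D => C.exCount + D.exCount
  | .ex _ C => C.exCount + 1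

def tboxSize (T : TBox) : ℕ := T.sum (fun ci => ci.1.size + ci.2.size)

def tboxConcNames (T : TBox) : Set ℕ :=
  {A | ∃ ci ∈ T, A ∈ ci.1.concNames ∪ ci.2.concNames}

def tboxRoleNames (T : TBox) : Set ℕ :=
  {r | ∃ ci ∈ T, r ∈ ci.1.roleNames ∪ ci.2.roleNames}

/-- Normal form (simultaneously `⊤`-free): every CI has one of the four shapes
`A ⊑ B`, `A₁ ⊓ A₂ ⊑ B`, `∃r.A ⊑ B`, `A ⊑ ∃r.B` with atomic concepts. -/
def NFci (ci : CI) : Prop :=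
  (∃ A B, ci = (ELConcept.atom A, ELConcept.atom B)) ∨
  (∃ A₁ A₂ B, ci = (ELConcept.conj (.atom A₁) (.atom A₂), ELConcept.atom B)) ∨
  (∃ r A B, ci = (ELConcept.ex r (.atom A), ELConcept.atom B)) ∨
  (∃ A r B, ci = (ELConcept.atom A, ELConcept.ex r (.atom B)))

def NormalForm (T : TBox) : Prop := ∀ ci ∈ T, NFci ci

/-- Normal form where the components may also be `⊤`. -/
def AtomTop (C : ELConcept) : Prop := C = .top ∨ ∃ A, C = ELConcept.atom A

def NFciTop (ci : CI) : Prop :=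
  (AtomTop ci.1 ∧ AtomTop ci.2) ∨
  (∃ A₁ A₂, ci.1 = ELConcept.conj A₁ A₂ ∧ AtomTop A₁ ∧ AtomTop A₂ ∧ AtomTop ci.2) ∨
  (∃ r A, ci.1 = ELConcept.ex r A ∧ AtomTop A ∧ AtomTop ci.2) ∨
  (∃ r B, ci.2 = ELConcept.ex r B ∧ AtomTop B ∧ AtomTop ci.1)

def NormalFormTop (T : TBox) : Prop := ∀ ci ∈ T, NFciTop ci

/-! ### EL description trees -/

noncomputable def conjOf (s : Finset ℕ) : ELConcept :=
  (s.toList.map ELConcept.atom).foldr ELConcept.conj ELConcept.top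

structure DescTree where
  V : Finset ℕ
  root : ℕ
  E : Finset (ℕ × ℕ × ℕ)      -- (v, r, w) : edge from v to w labeled r
  label : ℕ → Finset ℕ
  dep : ℕ → ℕ
  root_mem : root ∈ V
  edge_mem : ∀ e ∈ E, e.1 ∈ V ∧ e.2.2 ∈ V
  parent_unique : ∀ e ∈ E, ∀ e' ∈ E, e.2.2 = e'.2.2 → e = e'
  parent_exists : ∀ v ∈ V, v ≠ root → ∃ e ∈ E, e.2.2 = v
  dep_root : dep root = 0
  dep_edge : ∀ e ∈ E, dep e.2.2 = dep e.1 + 1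

noncomputable def DescTree.conceptAt (t : DescTree) : ℕ → ℕ → ELConcept
  | 0, v => conjOf (t.label v)
  | n + 1, v =>
      ((t.label v).toList.map ELConcept.atom ++
        (t.E.filter (fun e => e.1 = v)).toList.map
          (fun e => ELConcept.ex e.2.1 (t.conceptAt n e.2.2))).foldr ELConcept.conj ELConcept.top

/-- The concept `C_𝔗` represented by a description tree. -/
noncomputable def DescTree.concept (t : DescTree) : ELConcept := t.conceptAt t.V.card t.root

/-- `t` is a description tree for the concept `D` (concept equality is taken modulo
the conjunctions-as-sets convention). -/
def Represents (t : DescTree) (D : ELConcept) : Prop := CEq t.concept D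

/-- Weak homomorphism from `src` to `tgt`. -/
def WeakHom (src tgt : DescTree) (φ : ℕ → ℕ) : Prop :=
  φ src.root = tgt.root ∧ ∀ e ∈ src.E, (φ e.1, e.2.1, φ e.2.2) ∈ tgt.E

/-- `T`-homomorphism from `src` to `tgt`. -/
def THom (T : TBox) (src tgt : DescTree) (φ : ℕ → ℕ) : Prop :=
  WeakHom src tgt φ ∧
  ∀ w ∈ src.V, Entails T (conjOf (tgt.label (φ w))) (conjOf (src.label w))

/-! ### Abduction problems, hypotheses, connection minimality -/

inductive AtomConj (S : Set ℕ) : ELConcept → Prop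
  | atom {A} : A ∈ S → AtomConj S (.atom A)
  | conj {C D} : AtomConj S C → AtomConj S D → AtomConj S (.conj C D)

def IsHypothesis (T : TBox) (S : Set ℕ) (C1 C2 : ℕ) (H : TBox) : Prop :=
  (∀ ci ∈ H, (AtomConj S ci.1 ∨ ci.1 = ELConcept.top) ∧ AtomConj S ci.2) ∧
  Entails (T ∪ H) (.atom C1) (.atom C2) ∧
  ∀ ci ∈ H, ¬ EntailsCI T ci

def BuiltOver (S : Set ℕ) (C : ELConcept) : Prop := C.concNames ⊆ S

/-- The TBox determined by condition (4) of the definition of connection minimality. -/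
def hypSetOf (T : TBox) (t1 t2 : DescTree) (φ : ℕ → ℕ) : Set CI :=
  {ci | ∃ w ∈ t2.V, ci = (conjOf (t1.label (φ w)), conjOf (t2.label w)) ∧
        ¬ EntailsCI T ci}

/-- Conditions (1)–(4) of connection minimality, with explicit witnessing
description trees `t1`, `t2` for `D1`, `D2` and the weak homomorphism `φ`
from `𝔗_{D₂}` to `𝔗_{D₁}`. -/
def ConnMinimalWit (T : TBox) (S : Set ℕ) (C1 C2 : ℕ) (H : TBox)
    (D1 D2 : ELConcept) (t1 t2 : DescTree) (φ : ℕ → ℕ) : Prop :=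
  BuiltOver S D1 ∧ BuiltOver S D2 ∧
  Represents t1 D1 ∧ Represents t2 D2 ∧
  Entails T (.atom C1) D1 ∧
  Entails T D2 (.atom C2) ∧
  (∀ D2', Entails T D2' (.atom C2) → PrecSq D2' D2 → PrecSq D2 D2') ∧
  WeakHom t2 t1 φ ∧
  (↑H : Set CI) = hypSetOf T t1 t2 φ

def ConnMinimal (T : TBox) (S : Set ℕ) (C1 C2 : ℕ) (H : TBox) : Prop :=
  IsHypothesis T S C1 C2 H ∧
  ∃ D1 D2 t1 t2 φ, ConnMinimalWit T S C1 C2 H D1 D2 t1 t2 φ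

/-- Packedness of a witness: no alternative `D₁'`, `φ'` (for the same `D₂`, `t₂`)
strictly enlarges one of the left-hand side labels while keeping all others. -/
def PackedWit (T : TBox) (S : Set ℕ) (C1 : ℕ) (t1 t2 : DescTree) (φ : ℕ → ℕ) : Prop :=
  ¬ ∃ (D1' : ELConcept) (t1' : DescTree) (φ' : ℕ → ℕ) (w : ℕ),
      BuiltOver S D1' ∧ Represents t1' D1' ∧ Entails T (.atom C1) D1' ∧
      WeakHom t2 t1' φ' ∧ w ∈ t2.V ∧
      t1.label (φ w) ⊂ t1'.label (φ' w) ∧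
      ∀ w' ∈ t2.V, w' ≠ w → t1.label (φ w') = t1'.label (φ' w')

def PackedConnMinimal (T : TBox) (S : Set ℕ) (C1 C2 : ℕ) (H : TBox) : Prop :=
  IsHypothesis T S C1 C2 H ∧
  ∃ D1 D2 t1 t2 φ, ConnMinimalWit T S C1 C2 H D1 D2 t1 t2 φ ∧
    PackedWit T S C1 t1 t2 φ

/-! ### First-order logic: terms, clauses, semantics -/

/-- Skolem functions: one for each (copy, axiom) pair. -/
abbrev SkFun := Bool × CI

inductive Term : Type where
  | var : ℕ → Term
  | sk0 : Term
  | app : SkFun → Term → Term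
deriving DecidableEq

/-- Ground Skolem terms. -/
inductive GTerm : Type where
  | sk0 : GTerm
  | app : SkFun → GTerm → GTerm
deriving DecidableEq

def GTerm.toTerm : GTerm → Term
  | .sk0 => .sk0
  | .app f t => .app f t.toTerm

def GTerm.depth : GTerm → ℕ
  | .sk0 => 0
  | .app _ t => t.depth + 1

inductive GTerm.Subterm : GTerm → GTerm → Prop
  | refl (t) : GTerm.Subterm t t
  | app {s t} (f) : GTerm.Subterm s t → GTerm.Subterm s (.app f t)

/-- Atoms; unary predicates `(b, A)` where `b = false` marks the original copy of the
atomic concept `A` and `b = true` its duplicate `Ā`. -/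
inductive Atm : Type where
  | conc : (Bool × ℕ) → Term → Atm
  | role : ℕ → Term → Term → Atm
deriving DecidableEq

structure Lit : Type where
  pos : Bool
  atm : Atm
deriving DecidableEq

abbrev Clause := Finset Lit

inductive GAtm : Type where
  | conc : (Bool × ℕ) → GTerm → GAtm
  | role : ℕ → GTerm → GTerm → GAtm
deriving DecidableEq

def GAtm.toAtm : GAtm → Atm
  | .conc P t => .conc P t.toTerm
  | .role r t u => .role r t.toTerm u.toTerm

structure FOInterp (α : Type) where
  c0 : α
  app : SkFun → α → α
  conc : Bool × ℕ → Set α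
  role : ℕ → Set (α × α)

def Term.eval {α : Type} (I : FOInterp α) (ρ : ℕ → α) : Term → α
  | .var x => ρ x
  | .sk0 => I.c0
  | .app f t => I.app f (t.eval I ρ)

def Atm.sat {α : Type} (I : FOInterp α) (ρ : ℕ → α) : Atm → Prop
  | .conc P t => t.eval I ρ ∈ I.conc P
  | .role r t u => (t.eval I ρ, u.eval I ρ) ∈ I.role r

def Lit.sat {α : Type} (I : FOInterp α) (ρ : ℕ → α) (l : Lit) : Prop :=
  if l.pos then l.atm.sat I ρ else ¬ l.atm.sat I ρ

/-- Satisfaction of a clause: the universal closure of the disjunction holds. -/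
def ClauseSat {α : Type} (I : FOInterp α) (c : Clause) : Prop :=
  ∀ ρ : ℕ → α, ∃ l ∈ c, l.sat I ρ

def CModels {α : Type} (I : FOInterp α) (Ψ : Set Clause) : Prop :=
  ∀ c ∈ Ψ, ClauseSat I c

def CEntails (Ψ : Set Clause) (c : Clause) : Prop :=
  ∀ (α : Type) (I : FOInterp α), CModels I Ψ → ClauseSat I c

def ClEntails (c d : Clause) : Prop := CEntails {c} d

def IsPrimeImplicate (Ψ : Set Clause) (c : Clause) : Prop :=
  CEntails Ψ c ∧ ∀ c' : Clause, CEntails Ψ c' → ClEntails c' c → ClEntails c c'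

def Term.vars : Term → Set ℕ
  | .var x => {x}
  | .sk0 => ∅
  | .app _ t => t.vars

def Atm.vars : Atm → Set ℕ
  | .conc _ t => t.vars
  | .role _ t u => t.vars ∪ u.vars

def ClauseVars (c : Clause) : Set ℕ := {x | ∃ l ∈ c, x ∈ l.atm.vars}

def ClauseGround (c : Clause) : Prop := ClauseVars c = ∅
def ClausePositive (c : Clause) : Prop := ∀ l ∈ c, l.pos = true
def ClauseNegative (c : Clause) : Prop := ∀ l ∈ c, l.pos = false

def Atm.inSig (S : Set ℕ) : Atm → Prop
  | .conc P _ => P.2 ∈ S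
  | .role _ _ _ => True

def ClauseInSig (S : Set ℕ) (c : Clause) : Prop := ∀ l ∈ c, l.atm.inSig S

/-- Positive ground prime implicates over `Σ ∪ N_R`. -/
def PIpos (S : Set ℕ) (Ψ : Set Clause) : Set Clause :=
  {c | IsPrimeImplicate Ψ c ∧ ClauseGround c ∧ ClausePositive c ∧ ClauseInSig S c}

/-- Negative ground prime implicates over `Σ ∪ N_R`. -/
def PIneg (S : Set ℕ) (Ψ : Set Clause) : Set Clause :=
  {c | IsPrimeImplicate Ψ c ∧ ClauseGround c ∧ ClauseNegative c ∧ ClauseInSig S c}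

/-- The ground atom `a` belongs (as a unit clause) to `PI^{g+}_Σ(Ψ)`. -/
def InPIpos (S : Set ℕ) (Ψ : Set Clause) (a : GAtm) : Prop :=
  ({⟨true, a.toAtm⟩} : Clause) ∈ PIpos S Ψ

/-! ### Substitutions and resolution -/

def Term.subst (σ : ℕ → Term) : Term → Term
  | .var x => σ x
  | .sk0 => .sk0
  | .app f t => .app f (t.subst σ)

def Atm.subst (σ : ℕ → Term) : Atm → Atm
  | .conc P t => .conc P (t.subst σ)
  | .role r t u => .role r (t.subst σ) (u.subst σ)

def Lit.subst (σ : ℕ → Term) (l : Lit) : Lit := ⟨l.pos, l.atm.subst σ⟩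

def ClauseSubst (σ : ℕ → Term) (c : Clause) : Clause := c.image (Lit.subst σ)

def IsUnifier (σ : ℕ → Term) (a b : Atm) : Prop := a.subst σ = b.subst σ

def IsMGU (σ : ℕ → Term) (a b : Atm) : Prop :=
  IsUnifier σ a b ∧ ∀ τ, IsUnifier τ a b → ∃ δ, ∀ x, (σ x).subst δ = τ x

/-- Resolution derivations from `Ψ`, where every resolvent must satisfy `ok`. -/
inductive Deriv (Ψ : Set Clause) (ok : Clause → Prop) : Clause → Prop
  | hyp {c : Clause} : c ∈ Ψ → Deriv Ψ ok c
  | res {c₁ c₂ : Clause} {a b : Atm} {σ : ℕ → Term} :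
      Deriv Ψ ok c₁ → Deriv Ψ ok c₂ →
      (⟨true, a⟩ : Lit) ∈ c₁ → (⟨false, b⟩ : Lit) ∈ c₂ → IsMGU σ a b →
      ok (ClauseSubst σ (c₁.erase ⟨true, a⟩ ∪ c₂.erase ⟨false, b⟩)) →
      Deriv Ψ ok (ClauseSubst σ (c₁.erase ⟨true, a⟩ ∪ c₂.erase ⟨false, b⟩))
  | factor {c : Clause} {l₁ l₂ : Lit} {σ : ℕ → Term} :
      Deriv Ψ ok c → l₁ ∈ c → l₂ ∈ c → l₁ ≠ l₂ → l₁.pos = l₂.pos →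
      IsMGU σ l₁.atm l₂.atm →
      ok (ClauseSubst σ (c.erase l₂)) →
      Deriv Ψ ok (ClauseSubst σ (c.erase l₂))

/-! ### The translation Φ of an abduction problem -/

def vx : Term := .var 0
def vy : Term := .var 1
def pcl (b : Bool) (A : ℕ) (t : Term) : Lit := ⟨true, .conc (b, A) t⟩
def ncl (b : Bool) (A : ℕ) (t : Term) : Lit := ⟨false, .conc (b, A) t⟩
def prl (r : ℕ) (t u : Term) : Lit := ⟨true, .role r t u⟩
def nrl (r : ℕ) (t u : Term) : Lit := ⟨false, .role r t u⟩

def clausesOf (b : Bool) (ci : CI) : Set Clause :=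
  match ci with
  | (.atom A, .atom B) => {({ncl b A vx, pcl b B vx} : Clause)}
  | (.conj (.atom A₁) (.atom A₂), .atom B) =>
      {({ncl b A₁ vx, ncl b A₂ vx, pcl b B vx} : Clause)}
  | (.ex r (.atom A), .atom B) =>
      {({nrl r vx vy, ncl b A vy, pcl b B vx} : Clause)}
  | (.atom A, .ex r (.atom B)) =>
      {({ncl b A vx, prl r vx (.app (b, (.atom A, .ex r (.atom B))) vx)} : Clause),
       ({ncl b A vx, pcl b B (.app (b, (.atom A, .ex r (.atom B))) vx)} : Clause)}
  | _ => ∅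

/-- The clausal translation `Φ` of the abduction problem `⟨T, Σ, C₁ ⊑ C₂⟩`. -/
def Translation (T : TBox) (C1 C2 : ℕ) : Set Clause :=
  (⋃ ci ∈ T, clausesOf false ci ∪ clausesOf true ci) ∪
  {({pcl false C1 .sk0} : Clause), ({ncl true C2 .sk0} : Clause)}

/-- The presaturation `Φ_p` of a clause set. -/
def presat (Ψ : Set Clause) : Set Clause :=
  Ψ ∪ {c | ∃ (b : Bool) (A B : ℕ),
        c = ({ncl b A vx, pcl b B vx} : Clause) ∧ CEntails Ψ c}

/-! ### Herbrand interpretations -/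

def herb (S : Set GAtm) : FOInterp GTerm where
  c0 := .sk0
  app := .app
  conc := fun P => {t | GAtm.conc P t ∈ S}
  role := fun r => {p | GAtm.role r p.1 p.2 ∈ S}

def HModels (S : Set GAtm) (Ψ : Set Clause) : Prop := CModels (herb S) Ψ

def piPosAtoms (S : Set ℕ) (Ψ : Set Clause) : Set GAtm := {a | InPIpos S Ψ a}

/-- EL semantics of a concept in a Herbrand interpretation (original predicates). -/
def gsem (I : Set GAtm) : ELConcept → Set GTerm
  | .top => Set.univ
  | .atom A => {t | GAtm.conc (false, A) t ∈ I}
  | .conj C D => gsem I C ∩ gsem I D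
  | .ex r C => {t | ∃ u, GAtm.role r t u ∈ I ∧ u ∈ gsem I C}

/-! ### Canonical models of description trees -/

/-- The canonical model `I^c(sl)` of a description tree with Skolem labeling `sl`. -/
def canonModel (t : DescTree) (sl : ℕ → GTerm) : Set GAtm :=
  {a | ∃ e ∈ t.E, a = GAtm.role e.2.1 (sl e.1) (sl e.2.2)} ∪
  {a | ∃ v ∈ t.V, ∃ A ∈ t.label v, a = GAtm.conc (false, A) (sl v)}

/-- The unary-predicate part `I^c_A(sl)` of the canonical model, as labelled pairs. -/
def canonA (t : DescTree) (sl : ℕ → GTerm) : Set (ℕ × GTerm) :=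
  {p | ∃ v ∈ t.V, p.1 ∈ t.label v ∧ p.2 = sl v}

/-- The clause `⋁_{v ∈ V₂, B ∈ l₂(v)} ¬B̄(sl v)`. -/
def negTreeClause (t : DescTree) (sl : ℕ → GTerm) : Clause :=
  t.V.biUnion (fun v =>
    (t.label v).image (fun B => (⟨false, Atm.conc (true, B) (sl v).toTerm⟩ : Lit)))

/-! ### Constructible hypotheses -/

def negClauseOf (B : Finset (ℕ × GTerm)) : Clause :=
  B.image (fun p => (⟨false, Atm.conc (true, p.1) p.2.toTerm⟩ : Lit))

def posUnit (p : ℕ × GTerm) : Clause := {⟨true, Atm.conc (false, p.1) p.2.toTerm⟩}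

/-- `C_{X,t} = ⊓{A | A(t) ∈ X}`. -/
noncomputable def CAt (X : Finset (ℕ × GTerm)) (t : GTerm) : ELConcept :=
  conjOf ((X.filter (fun p => p.2 = t)).image Prod.fst)

/-- `H` is the hypothesis constructed from the sets `A` and `B` of ground atoms. -/
def ConstructibleVia (S : Set ℕ) (Ψ : Set Clause)
    (A B : Finset (ℕ × GTerm)) (H : TBox) : Prop :=
  A.Nonempty ∧ B.Nonempty ∧
  negClauseOf B ∈ PIneg S Ψ ∧
  (∀ p ∈ B, ∃ a, InPIpos S Ψ (GAtm.conc (false, a) p.2)) ∧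
  ((↑A : Set (ℕ × GTerm)) =
    {q | InPIpos S Ψ (GAtm.conc (false, q.1) q.2) ∧ ∃ p ∈ B, p.2 = q.2}) ∧
  ((↑H : Set CI) =
    {ci | ∃ p ∈ B, ci = (CAt A p.2, CAt B p.2) ∧ ¬ PrecSq (CAt B p.2) (CAt A p.2)})

def Constructible (S : Set ℕ) (Ψ : Set Clause) (H : TBox) : Prop :=
  ∃ A B, ConstructibleVia S Ψ A B H

/-! ### Clause shapes I3–I7, signature counts -/

def isI3 (c : Clause) : Prop :=
  ∃ P Q : Bool × ℕ, c = ({⟨false, .conc P vx⟩, ⟨true, .conc Q vx⟩} : Clause)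

def isI4 (c : Clause) : Prop :=
  ∃ P₁ P₂ Q : Bool × ℕ,
    c = ({⟨false, .conc P₁ vx⟩, ⟨false, .conc P₂ vx⟩, ⟨true, .conc Q vx⟩} : Clause)

def isI5 (c : Clause) : Prop :=
  ∃ (r : ℕ) (P Q : Bool × ℕ),
    c = ({⟨false, .role r vx vy⟩, ⟨false, .conc P vy⟩, ⟨true, .conc Q vx⟩} : Clause)

def isI7 (c : Clause) : Prop :=
  ∃ (P Q : Bool × ℕ) (f : SkFun),
    c = ({⟨false, .conc P vx⟩, ⟨true, .conc Q (.app f vx)⟩} : Clause)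

/-- The atomic concept `A_sk` occurring positively in the I7-clause introducing `sk`
(as a predicate, with the copy flag of `sk`). -/
def skHeadPred (f : SkFun) : Bool × ℕ :=
  (f.1, match f.2.2 with
        | .ex _ (.atom B) => B
        | _ => 0)

def Term.funs : Term → Set SkFun
  | .var _ => ∅
  | .sk0 => ∅
  | .app f t => insert f t.funs

def Atm.funs : Atm → Set SkFun
  | .conc _ t => t.funs
  | .role _ t u => t.funs ∪ u.funs

def clauseFuns (c : Clause) : Set SkFun := {f | ∃ l ∈ c, f ∈ l.atm.funs}

def clauseConcs (c : Clause) : Set (Bool × ℕ) := {P | ∃ l ∈ c, ∃ t, l.atm = Atm.conc P t}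

/-- The number of atomic concepts occurring in a clause set. -/
noncomputable def numConcs (Ψ : Set Clause) : ℕ := Set.ncard {P | ∃ c ∈ Ψ, P ∈ clauseConcs c}

/-- The number of occurrences of existential role restrictions in a TBox. -/
def exOccs (T : TBox) : ℕ := T.sum (fun ci => ci.1.exCount + ci.2.exCount)

/-- The number of Skolem functions occurring in `Ψ` introduced for the original copy. -/
noncomputable def numOrigSk (Ψ : Set Clause) : ℕ :=
  Set.ncard {f : SkFun | f.1 = false ∧ ∃ c ∈ Ψ, f ∈ clauseFuns c}

def unitC (P : Bool × ℕ) (t : GTerm) : Clause := {⟨true, .conc P t.toTerm⟩}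
def negUnitC (P : Bool × ℕ) (t : GTerm) : Clause := {⟨false, .conc P t.toTerm⟩}

/-! ### Skolem trees and solution trees -/

structure SkolemTree where
  V : Finset ℕ
  root : ℕ
  E : Finset (ℕ × ℕ)
  s : ℕ → GTerm
  dep : ℕ → ℕ
  root_mem : root ∈ V
  s_root : s root = .sk0
  edge_mem : ∀ e ∈ E, e.1 ∈ V ∧ e.2 ∈ V
  edge_term : ∀ e ∈ E, s e.2 = s e.1 ∨ ∃ f, s e.2 = GTerm.app f (s e.1)
  parent_unique : ∀ e ∈ E, ∀ e' ∈ E, e.2 = e'.2 → e = e'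
  parent_exists : ∀ v ∈ V, v ≠ root → ∃ e ∈ E, e.2 = v
  dep_root : dep root = 0
  dep_edge : ∀ e ∈ E, dep e.2 = dep e.1 + 1

/-- `v` is an ancestor of `w` (every node is an ancestor of itself). -/
def SkolemTree.Ancestor (F : SkolemTree) (v w : ℕ) : Prop :=
  Relation.ReflTransGen (fun a b => (a, b) ∈ F.E) v w

/-- The descendants of `v` (the nodes of the subtree under `v`). -/
def SkolemTree.Desc (F : SkolemTree) (v : ℕ) : Set ℕ := {w | F.Ancestor v w}

/-- The positive labeling `l⁺`. -/
def posLab (Ψ : Set Clause) (F : SkolemTree) (v : ℕ) : Set ℕ :=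
  {A | InPIpos Set.univ Ψ (GAtm.conc (false, A) (F.s v))}

def SkolemTree.children (F : SkolemTree) (v : ℕ) : Finset ℕ :=
  (F.E.filter (fun e => e.1 = v)).image Prod.snd

def SkolemTree.leaves (F : SkolemTree) : Finset ℕ :=
  F.V.filter (fun v => F.E.filter (fun e => e.1 = v) = ∅)

/-- The unit role facts `{r(t, sk(t)) ∈ PI^{g+}}`. -/
def roleFacts (Ψ : Set Clause) : Set Clause :=
  {c | (∃ (r : ℕ) (t : GTerm) (f : SkFun),
        c = ({⟨true, Atm.role r t.toTerm (GTerm.app f t).toTerm⟩} : Clause)) ∧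
       c ∈ PIpos Set.univ Ψ}

def nonGroundOf (Ψ : Set Clause) : Set Clause := {c | c ∈ Ψ ∧ ¬ ClauseGround c}

/-- Negative labeling `l⁻` for a Skolem tree (labels are duplicate concept names,
recorded by their underlying name in `N_C`). -/
def IsNegLabeling (Ψ : Set Clause) (C2 : ℕ) (F : SkolemTree) (ln : ℕ → ℕ) : Prop :=
  ln F.root = C2 ∧
  ∀ v ∈ F.V, F.children v ≠ ∅ →
    Deriv ({negUnitC (true, ln v) (F.s v)} ∪ roleFacts Ψ ∪ nonGroundOf (presat Ψ))
      (fun _ => True)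
      ((F.children v).image
        (fun w => (⟨false, Atm.conc (true, ln w) (F.s w).toTerm⟩ : Lit)))

/-- The clause `φ_{F,l⁻}` determined by the leaves.  (Clauses are finite sets of
literals, so it is automatically considered up to repetition of literals.) -/
def leavesClause (F : SkolemTree) (ln : ℕ → ℕ) : Clause :=
  F.leaves.image (fun v => (⟨false, Atm.conc (true, ln v) (F.s v).toTerm⟩ : Lit))

def IsSolutionTree (Ψ : Set Clause) (C2 : ℕ) (F : SkolemTree) (ln : ℕ → ℕ) : Prop :=
  (∀ v ∈ F.V, (posLab Ψ F v).Nonempty) ∧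
  IsNegLabeling Ψ C2 F ln ∧
  leavesClause F ln ∈ PIneg Set.univ Ψ ∧
  ∃ (A B : Finset (ℕ × GTerm)) (H : TBox),
    ConstructibleVia Set.univ Ψ A B H ∧
    (↑B : Set (ℕ × GTerm)) = {p | ∃ v ∈ F.leaves, p = (ln v, F.s v)}

/-- The solution `{⊓l⁺(v) ⊑ l⁻(v) | v a leaf}` of a solution tree. -/
def treeSol (Ψ : Set Clause) (F : SkolemTree) (ln : ℕ → ℕ) : Set CI :=
  {ci | ∃ v ∈ F.leaves, ∃ s : Finset ℕ, (↑s : Set ℕ) = posLab Ψ F v ∧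
        ci = (conjOf s, ELConcept.atom (ln v))}

/-- Minimality: no solution tree with strictly fewer nodes has a solution
included in the solution of this one. -/
def MinimalSolutionTree (Ψ : Set Clause) (C2 : ℕ) (F : SkolemTree) (ln : ℕ → ℕ) : Prop :=
  IsSolutionTree Ψ C2 F ln ∧
  ∀ (F' : SkolemTree) (ln' : ℕ → ℕ),
    IsSolutionTree Ψ C2 F' ln' →
    treeSol Ψ F' ln' ⊆ treeSol Ψ F ln →
    F.V.card ≤ F'.V.card

/-- Replace the (unique) occurrence of `old` as a suffix of a ground term by `new`. -/
def GTerm.replaceSuffix (old new : GTerm) : GTerm → GTerm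
  | .sk0 => if GTerm.sk0 = old then new else .sk0
  | .app f u => if GTerm.app f u = old then new else .app f (GTerm.replaceSuffix old new u)


/-! ### Auxiliary development for Statement 13 -/

section Stmt13

variable {T : TBox} {C1 C2 : ℕ}

/-- The least Herbrand model of the definite part of the translation. -/
inductive Mem (T : TBox) (C1 : ℕ) : GAtm → Prop
  | base : Mem T C1 (.conc (false, C1) .sk0)
  | sub {A B : ℕ} {t : GTerm} :
      (ELConcept.atom A, ELConcept.atom B) ∈ T →
      Mem T C1 (.conc (false, A) t) → Mem T C1 (.conc (false, B) t)
  | cnj {A1 A2 B : ℕ} {t : GTerm} :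
      (ELConcept.conj (.atom A1) (.atom A2), ELConcept.atom B) ∈ T →
      Mem T C1 (.conc (false, A1) t) → Mem T C1 (.conc (false, A2) t) →
      Mem T C1 (.conc (false, B) t)
  | exL {r A B : ℕ} {t u : GTerm} :
      (ELConcept.ex r (.atom A), ELConcept.atom B) ∈ T →
      Mem T C1 (.role r t u) → Mem T C1 (.conc (false, A) u) →
      Mem T C1 (.conc (false, B) t)
  | exR1 {A r B : ℕ} {t : GTerm} :
      (ELConcept.atom A, ELConcept.ex r (.atom B)) ∈ T →
      Mem T C1 (.conc (false, A) t) →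
      Mem T C1 (.role r t (.app (false, (.atom A, .ex r (.atom B))) t))
  | exR2 {A r B : ℕ} {t : GTerm} :
      (ELConcept.atom A, ELConcept.ex r (.atom B)) ∈ T →
      Mem T C1 (.conc (false, A) t) →
      Mem T C1 (.conc (false, B) (.app (false, (.atom A, .ex r (.atom B))) t))

def geval {α : Type} (I : FOInterp α) : GTerm → α
  | .sk0 => I.c0
  | .app f t => I.app f (geval I t)

def GAtm.gsat {α : Type} (I : FOInterp α) : GAtm → Prop
  | .conc P t => geval I t ∈ I.conc P
  | .role r t u => (geval I t, geval I u) ∈ I.role r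

lemma eval_toTerm {α : Type} (I : FOInterp α) (ρ : ℕ → α) (g : GTerm) :
    Term.eval I ρ g.toTerm = geval I g := by
  induction g <;> simp [GTerm.toTerm, Term.eval, geval, *]

lemma sat_toAtm {α : Type} (I : FOInterp α) (ρ : ℕ → α) (a : GAtm) :
    Atm.sat I ρ a.toAtm ↔ a.gsat I := by
  cases a <;> simp [GAtm.toAtm, Atm.sat, GAtm.gsat, eval_toTerm]

lemma geval_herb (S : Set GAtm) (g : GTerm) : geval (herb S) g = g := by
  induction g with
  | sk0 => rfl
  | app f t ih => show GTerm.app f (geval (herb S) t) = GTerm.app f t; rw [ih]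

lemma gsat_herb (S : Set GAtm) (a : GAtm) : a.gsat (herb S) ↔ a ∈ S := by
  cases a <;> simp only [GAtm.gsat, geval_herb] <;> exact Iff.rfl

lemma subst_toTerm (σ : ℕ → Term) (g : GTerm) : (g.toTerm).subst σ = g.toTerm := by
  induction g <;> simp [GTerm.toTerm, Term.subst, *]

lemma subst_var (t : Term) : t.subst Term.var = t := by
  induction t <;> simp [Term.subst, *]

lemma mem_not_dup {A : ℕ} {t : GTerm} (h : Mem T C1 (.conc (true, A) t)) : False := by
  cases h

/-! Clause membership in the translation. -/

lemma mem_Phi_false {ci : CI} (hci : ci ∈ T) {c : Clause} (hc : c ∈ clausesOf false ci) :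
    c ∈ Translation T C1 C2 :=
  Set.mem_union_left _ (Set.mem_biUnion hci (Set.mem_union_left _ hc))

lemma mem_Phi_true {ci : CI} (hci : ci ∈ T) {c : Clause} (hc : c ∈ clausesOf true ci) :
    c ∈ Translation T C1 C2 :=
  Set.mem_union_left _ (Set.mem_biUnion hci (Set.mem_union_right _ hc))

lemma mem_Phi_C1 : ({pcl false C1 .sk0} : Clause) ∈ Translation T C1 C2 :=
  Set.mem_union_right _ (Set.mem_insert _ _)

/-! Entailment helpers. -/

lemma entails_refl {C : ELConcept} : Entails T C C := fun _ _ _ => Set.Subset.refl _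

lemma entails_trans {C D E : ELConcept} (h1 : Entails T C D) (h2 : Entails T D E) :
    Entails T C E := fun α I hM => (h1 α I hM).trans (h2 α I hM)

lemma entails_ax {C D : ELConcept} (h : (C, D) ∈ T) : Entails T C D :=
  fun _ I hM => hM _ h

lemma entails_conj_intro {C D E : ELConcept} (h1 : Entails T C D) (h2 : Entails T C E) :
    Entails T C (.conj D E) := fun α I hM => Set.subset_inter (h1 α I hM) (h2 α I hM)

lemma entails_ex_mono (r : ℕ) {C D : ELConcept} (h : Entails T C D) :
    Entails T (.ex r C) (.ex r D) := by
  intro α I hM x hx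
  obtain ⟨y, hy1, hy2⟩ := hx
  exact ⟨y, hy1, h α I hM hy2⟩

lemma entails_step {A0 r B0 A B : ℕ}
    (hT0 : (ELConcept.atom A0, ELConcept.ex r (.atom B0)) ∈ T)
    (hT1 : (ELConcept.ex r (.atom A), ELConcept.atom B) ∈ T)
    (hE : Entails T (.atom B0) (.atom A)) :
    Entails T (.atom A0) (.atom B) :=
  entails_trans (entails_ax hT0) (entails_trans (entails_ex_mono r hE) (entails_ax hT1))

/-! The base concept of a ground Skolem term. -/

def baseC (C1 : ℕ) : GTerm → ELConcept
  | .sk0 => .atom C1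
  | .app f _ =>
      match f.2.2 with
      | .ex _ (.atom B) => .atom B
      | _ => .top

/-- Semantic invariant of the least Herbrand model. -/
lemma mem_G {a : GAtm} (ha : Mem T C1 a) :
    (∀ P t, a = .conc P t → Entails T (baseC C1 t) (.atom P.2)) ∧
    (∀ r t u, a = .role r t u → ∃ A B,
      (ELConcept.atom A, ELConcept.ex r (.atom B)) ∈ T ∧
      u = GTerm.app (false, (.atom A, .ex r (.atom B))) t ∧
      Entails T (baseC C1 t) (.atom A)) := by
  induction ha with
  | base =>
    constructor
    · rintro P t h
      injection h with h1 h2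
      subst h1; subst h2
      exact entails_refl
    · intro r t u h; simp at h
  | @sub A B t hT hm ih =>
    constructor
    · rintro P t' h
      injection h with h1 h2
      subst h1; subst h2
      exact entails_trans (ih.1 _ _ rfl) (entails_ax hT)
    · intro r t u h; simp at h
  | @cnj A1 A2 B t hT hm1 hm2 ih1 ih2 =>
    constructor
    · rintro P t' h
      injection h with h1 h2
      subst h1; subst h2
      exact entails_trans (entails_conj_intro (ih1.1 _ _ rfl) (ih2.1 _ _ rfl)) (entails_ax hT)
    · intro r t u h; simp at h
  | @exL r A B t u hT hr hc ihr ihc =>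
    constructor
    · rintro P t' h
      injection h with h1 h2
      subst h1; subst h2
      obtain ⟨A0, B0, hT0, hu, hE0⟩ := ihr.2 _ _ _ rfl
      have hBA : Entails T (.atom B0) (.atom A) := by
        have h' := ihc.1 _ _ rfl
        rw [hu] at h'
        simpa [baseC] using h'
      exact entails_trans hE0 (entails_step hT0 hT hBA)
    · intro r t u h; simp at h
  | @exR1 A r B t hT hm ih =>
    constructor
    · intro P t' h; simp at h
    · rintro r' t' u' h
      injection h with h1 h2 h3
      subst h1; subst h2; subst h3
      exact ⟨_, _, hT, rfl, ih.1 _ _ rfl⟩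
  | @exR2 A r B t hT hm ih =>
    constructor
    · rintro P t' h
      injection h with h1 h2
      subst h1; subst h2
      simp only [baseC]
      exact entails_refl
    · intro r' t' u' h; simp at h

/-- Soundness of the least Herbrand model. -/
lemma mem_sound {a : GAtm} (ha : Mem T C1 a) :
    ∀ (α : Type) (I : FOInterp α), CModels I (Translation T C1 C2) → a.gsat I := by
  induction ha with
  | base =>
    intro α I hI
    obtain ⟨l, hl, hs⟩ := hI _ mem_Phi_C1 (fun _ => I.c0)
    rw [Finset.mem_singleton] at hl
    subst hl
    simpa [Lit.sat, pcl, Atm.sat, Term.eval, GAtm.gsat, geval] using hs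
  | @sub A B t hT hm ih =>
    intro α I hI
    obtain ⟨l, hl, hs⟩ := hI _ (mem_Phi_false hT rfl) (fun _ => geval I t)
    have ihs : geval I t ∈ I.conc (false, A) := by simpa [GAtm.gsat] using ih α I hI
    simp only [Finset.mem_insert, Finset.mem_singleton] at hl
    rcases hl with rfl | rfl
    · exfalso
      simp only [Lit.sat, ncl, Atm.sat, Term.eval, vx] at hs
      exact hs ihs
    · simpa [Lit.sat, pcl, Atm.sat, Term.eval, vx, GAtm.gsat] using hs
  | @cnj A1 A2 B t hT hm1 hm2 ih1 ih2 =>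
    intro α I hI
    obtain ⟨l, hl, hs⟩ := hI _ (mem_Phi_false hT rfl) (fun _ => geval I t)
    have ihs1 : geval I t ∈ I.conc (false, A1) := by simpa [GAtm.gsat] using ih1 α I hI
    have ihs2 : geval I t ∈ I.conc (false, A2) := by simpa [GAtm.gsat] using ih2 α I hI
    simp only [Finset.mem_insert, Finset.mem_singleton] at hl
    rcases hl with rfl | rfl | rfl
    · exfalso
      simp only [Lit.sat, ncl, Atm.sat, Term.eval, vx] at hs
      exact hs ihs1
    · exfalso
      simp only [Lit.sat, ncl, Atm.sat, Term.eval, vx] at hs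
      exact hs ihs2
    · simpa [Lit.sat, pcl, Atm.sat, Term.eval, vx, GAtm.gsat] using hs
  | @exL r A B t u hT hr hc ihr ihc =>
    intro α I hI
    obtain ⟨l, hl, hs⟩ := hI _ (mem_Phi_false hT rfl)
      (fun n => if n = 0 then geval I t else geval I u)
    have ihsr : (geval I t, geval I u) ∈ I.role r := by simpa [GAtm.gsat] using ihr α I hI
    have ihsc : geval I u ∈ I.conc (false, A) := by simpa [GAtm.gsat] using ihc α I hI
    simp only [Finset.mem_insert, Finset.mem_singleton] at hl
    rcases hl with rfl | rfl | rfl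
    · exfalso
      simp only [Lit.sat, nrl, Atm.sat, Term.eval, vx, vy] at hs
      exact hs ihsr
    · exfalso
      simp only [Lit.sat, ncl, Atm.sat, Term.eval, vy] at hs
      exact hs ihsc
    · simpa [Lit.sat, pcl, Atm.sat, Term.eval, vx, GAtm.gsat] using hs
  | @exR1 A r B t hT hm ih =>
    intro α I hI
    obtain ⟨l, hl, hs⟩ := hI _ (mem_Phi_false hT (Set.mem_insert _ _)) (fun _ => geval I t)
    have ihs : geval I t ∈ I.conc (false, A) := by simpa [GAtm.gsat] using ih α I hI
    simp only [Finset.mem_insert, Finset.mem_singleton] at hl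
    rcases hl with rfl | rfl
    · exfalso
      simp only [Lit.sat, ncl, Atm.sat, Term.eval, vx] at hs
      exact hs ihs
    · simpa [Lit.sat, prl, Atm.sat, Term.eval, vx, GAtm.gsat, geval] using hs
  | @exR2 A r B t hT hm ih =>
    intro α I hI
    obtain ⟨l, hl, hs⟩ := hI _
      (mem_Phi_false hT (Set.mem_insert_iff.2 (Or.inr rfl))) (fun _ => geval I t)
    have ihs : geval I t ∈ I.conc (false, A) := by simpa [GAtm.gsat] using ih α I hI
    simp only [Finset.mem_insert, Finset.mem_singleton] at hl
    rcases hl with rfl | rfl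
    · exfalso
      simp only [Lit.sat, ncl, Atm.sat, Term.eval, vx] at hs
      exact hs ihs
    · simpa [Lit.sat, pcl, Atm.sat, Term.eval, vx, GAtm.gsat, geval] using hs

end Stmt13

section Stmt13b

variable {T : TBox} {C1 C2 : ℕ}

/-- The Herbrand interpretation generated by `Mem` is a model of the translation. -/
lemma herb_models (hNF : NormalForm T) :
    CModels (herb {a | Mem T C1 a}) (Translation T C1 C2) := by
  intro c hc
  rcases hc with hc | hc
  · rw [Set.mem_iUnion₂] at hc
    obtain ⟨ci, hci, hc⟩ := hc
    rcases hNF ci hci with ⟨A, B, rfl⟩ | ⟨A1, A2, B, rfl⟩ | ⟨r, A, B, rfl⟩ | ⟨A, r, B, rfl⟩ <;>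
      rcases hc with hc | hc
    · simp only [clausesOf, Set.mem_singleton_iff] at hc; subst hc
      intro ρ
      by_cases h : Mem T C1 (.conc (false, A) (ρ 0))
      · exact ⟨pcl false B vx, by simp, by
          simpa [Lit.sat, pcl, Atm.sat, Term.eval, vx, herb] using Mem.sub hci h⟩
      · exact ⟨ncl false A vx, by simp, by
          simpa [Lit.sat, ncl, Atm.sat, Term.eval, vx, herb] using h⟩
    · simp only [clausesOf, Set.mem_singleton_iff] at hc; subst hc
      intro ρ
      exact ⟨ncl true A vx, by simp, by
        simpa [Lit.sat, ncl, Atm.sat, Term.eval, vx, herb] using fun h => mem_not_dup h⟩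
    · simp only [clausesOf, Set.mem_singleton_iff] at hc; subst hc
      intro ρ
      by_cases h1 : Mem T C1 (.conc (false, A1) (ρ 0))
      · by_cases h2 : Mem T C1 (.conc (false, A2) (ρ 0))
        · exact ⟨pcl false B vx, by simp, by
            simpa [Lit.sat, pcl, Atm.sat, Term.eval, vx, herb] using Mem.cnj hci h1 h2⟩
        · exact ⟨ncl false A2 vx, by simp, by
            simpa [Lit.sat, ncl, Atm.sat, Term.eval, vx, herb] using h2⟩
      · exact ⟨ncl false A1 vx, by simp, by
          simpa [Lit.sat, ncl, Atm.sat, Term.eval, vx, herb] using h1⟩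
    · simp only [clausesOf, Set.mem_singleton_iff] at hc; subst hc
      intro ρ
      exact ⟨ncl true A1 vx, by simp, by
        simpa [Lit.sat, ncl, Atm.sat, Term.eval, vx, herb] using fun h => mem_not_dup h⟩
    · simp only [clausesOf, Set.mem_singleton_iff] at hc; subst hc
      intro ρ
      by_cases h1 : Mem T C1 (.role r (ρ 0) (ρ 1))
      · by_cases h2 : Mem T C1 (.conc (false, A) (ρ 1))
        · exact ⟨pcl false B vx, by simp, by
            simpa [Lit.sat, pcl, Atm.sat, Term.eval, vx, herb] using Mem.exL hci h1 h2⟩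
        · exact ⟨ncl false A vy, by simp, by
            simpa [Lit.sat, ncl, Atm.sat, Term.eval, vy, herb] using h2⟩
      · exact ⟨nrl r vx vy, by simp, by
          simpa [Lit.sat, nrl, Atm.sat, Term.eval, vx, vy, herb] using h1⟩
    · simp only [clausesOf, Set.mem_singleton_iff] at hc; subst hc
      intro ρ
      exact ⟨ncl true A vy, by simp, by
        simpa [Lit.sat, ncl, Atm.sat, Term.eval, vy, herb] using fun h => mem_not_dup h⟩
    · simp only [clausesOf, Set.mem_insert_iff, Set.mem_singleton_iff] at hc
      rcases hc with hc | hc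
      · subst hc
        intro ρ
        by_cases h : Mem T C1 (.conc (false, A) (ρ 0))
        · exact ⟨prl r vx (.app (false, (.atom A, .ex r (.atom B))) vx), by simp, by
            simpa [Lit.sat, prl, Atm.sat, Term.eval, vx, herb] using Mem.exR1 hci h⟩
        · exact ⟨ncl false A vx, by simp, by
            simpa [Lit.sat, ncl, Atm.sat, Term.eval, vx, herb] using h⟩
      · subst hc
        intro ρ
        by_cases h : Mem T C1 (.conc (false, A) (ρ 0))
        · exact ⟨pcl false B (.app (false, (.atom A, .ex r (.atom B))) vx), by simp, by
            simpa [Lit.sat, pcl, Atm.sat, Term.eval, vx, herb] using Mem.exR2 hci h⟩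
        · exact ⟨ncl false A vx, by simp, by
            simpa [Lit.sat, ncl, Atm.sat, Term.eval, vx, herb] using h⟩
    · simp only [clausesOf, Set.mem_insert_iff, Set.mem_singleton_iff] at hc
      rcases hc with hc | hc
      · subst hc
        intro ρ
        exact ⟨ncl true A vx, by simp, by
          simpa [Lit.sat, ncl, Atm.sat, Term.eval, vx, herb] using fun h => mem_not_dup h⟩
      · subst hc
        intro ρ
        exact ⟨ncl true A vx, by simp, by
          simpa [Lit.sat, ncl, Atm.sat, Term.eval, vx, herb] using fun h => mem_not_dup h⟩
  · rcases Set.mem_insert_iff.1 hc with hc | hc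
    · subst hc
      intro ρ
      exact ⟨pcl false C1 .sk0, by simp, by
        simpa [Lit.sat, pcl, Atm.sat, Term.eval, herb] using Mem.base⟩
    · rw [Set.mem_singleton_iff] at hc; subst hc
      intro ρ
      exact ⟨ncl true C2 .sk0, by simp, by
        simpa [Lit.sat, ncl, Atm.sat, Term.eval, herb] using fun h => mem_not_dup h⟩

/-- The EL interpretation obtained from a first-order interpretation. -/
def toInterp {α : Type} (I : FOInterp α) : Interp α where
  conc := fun A => I.conc (false, A)
  role := I.role

lemma models_T (hNF : NormalForm T) {α : Type} {I : FOInterp α}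
    (hI : CModels I (Translation T C1 C2)) : Models (toInterp I) T := by
  intro ci hci
  rcases hNF ci hci with ⟨A, B, rfl⟩ | ⟨A1, A2, B, rfl⟩ | ⟨r, A, B, rfl⟩ | ⟨A, r, B, rfl⟩
  · intro x hx
    simp only [ELConcept.sem, toInterp] at hx ⊢
    obtain ⟨l, hl, hs⟩ := hI _ (mem_Phi_false hci rfl) (fun _ => x)
    simp only [Finset.mem_insert, Finset.mem_singleton] at hl
    rcases hl with rfl | rfl
    · simp only [Lit.sat, ncl, Atm.sat, Term.eval, vx] at hs
      exact absurd hx hs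
    · simpa [Lit.sat, pcl, Atm.sat, Term.eval, vx] using hs
  · intro x hx
    simp only [ELConcept.sem, toInterp, Set.mem_inter_iff] at hx
    simp only [ELConcept.sem, toInterp]
    obtain ⟨l, hl, hs⟩ := hI _ (mem_Phi_false hci rfl) (fun _ => x)
    simp only [Finset.mem_insert, Finset.mem_singleton] at hl
    rcases hl with rfl | rfl | rfl
    · simp only [Lit.sat, ncl, Atm.sat, Term.eval, vx] at hs
      exact absurd hx.1 hs
    · simp only [Lit.sat, ncl, Atm.sat, Term.eval, vx] at hs
      exact absurd hx.2 hs
    · simpa [Lit.sat, pcl, Atm.sat, Term.eval, vx] using hs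
  · intro x hx
    simp only [ELConcept.sem, toInterp, Set.mem_setOf_eq] at hx
    simp only [ELConcept.sem, toInterp]
    obtain ⟨y, hy1, hy2⟩ := hx
    obtain ⟨l, hl, hs⟩ := hI _ (mem_Phi_false hci rfl) (fun n => if n = 0 then x else y)
    simp only [Finset.mem_insert, Finset.mem_singleton] at hl
    rcases hl with rfl | rfl | rfl
    · simp only [Lit.sat, nrl, Atm.sat, Term.eval, vx, vy] at hs
      simp at hs
      exact absurd hy1 hs
    · simp only [Lit.sat, ncl, Atm.sat, Term.eval, vy] at hs
      simp at hs
      exact absurd hy2 hs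
    · simpa [Lit.sat, pcl, Atm.sat, Term.eval, vx] using hs
  · intro x hx
    simp only [ELConcept.sem, toInterp] at hx
    simp only [ELConcept.sem, toInterp, Set.mem_setOf_eq]
    obtain ⟨l1, hl1, hs1⟩ := hI _ (mem_Phi_false hci (Set.mem_insert _ _)) (fun _ => x)
    obtain ⟨l2, hl2, hs2⟩ := hI _
      (mem_Phi_false hci (Set.mem_insert_iff.2 (Or.inr rfl))) (fun _ => x)
    simp only [Finset.mem_insert, Finset.mem_singleton] at hl1 hl2
    rcases hl1 with rfl | rfl
    · simp only [Lit.sat, ncl, Atm.sat, Term.eval, vx] at hs1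
      exact absurd hx hs1
    · rcases hl2 with rfl | rfl
      · simp only [Lit.sat, ncl, Atm.sat, Term.eval, vx] at hs2
        exact absurd hx hs2
      · simp only [Lit.sat, prl, pcl, Atm.sat, Term.eval, vx] at hs1 hs2
        exact ⟨_, hs1, hs2⟩

lemma centails_of_entails (hNF : NormalForm T) {A B : ℕ}
    (hE : Entails T (.atom A) (.atom B)) :
    CEntails (Translation T C1 C2) ({ncl false A vx, pcl false B vx} : Clause) := by
  intro α I hI ρ
  by_cases h : ρ 0 ∈ I.conc (false, A)
  · refine ⟨pcl false B vx, by simp, ?_⟩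
    have hx : ρ 0 ∈ (ELConcept.atom A).sem (toInterp I) := by
      simpa [ELConcept.sem, toInterp] using h
    have := hE α (toInterp I) (models_T hNF hI) hx
    simpa [Lit.sat, pcl, Atm.sat, Term.eval, vx, ELConcept.sem, toInterp] using this
  · exact ⟨ncl false A vx, by simp, by
      simpa [Lit.sat, ncl, Atm.sat, Term.eval, vx] using h⟩

end Stmt13b

section Stmt13c

variable {T : TBox} {C1 C2 : ℕ}

def σg (g : GTerm) : ℕ → Term := fun n => if n = 0 then g.toTerm else .var n

lemma isMGU_g (P : Bool × ℕ) (g : GTerm) :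
    IsMGU (σg g) (.conc P g.toTerm) (.conc P vx) := by
  constructor
  · simp [IsUnifier, Atm.subst, Term.subst, vx, σg, subst_toTerm]
  · intro τ hτ
    simp only [IsUnifier, Atm.subst, Term.subst, vx, subst_toTerm] at hτ
    injection hτ with h1 h2
    refine ⟨τ, fun x => ?_⟩
    by_cases hx : x = 0
    · subst hx
      simpa [σg, subst_toTerm] using h2
    · simp [σg, hx, Term.subst]

lemma isMGU_id (a : Atm) : IsMGU Term.var a a :=
  ⟨rfl, fun τ _ => ⟨τ, fun x => by simp [Term.subst]⟩⟩

lemma atm_subst_var (a : Atm) : a.subst Term.var = a := by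
  cases a <;> simp [Atm.subst, subst_var]

lemma lit_subst_var (l : Lit) : l.subst Term.var = l := by
  cases l; simp [Lit.subst, atm_subst_var]

lemma clauseSubst_var (c : Clause) : ClauseSubst Term.var c = c := by
  rw [ClauseSubst, show Lit.subst Term.var = id from funext lit_subst_var, Finset.image_id]

lemma deriv_unit_res {Ψ : Set Clause} (P : Bool × ℕ) (g : GTerm) {c : Clause}
    (h1 : Deriv Ψ (fun _ => True) {(⟨true, .conc P g.toTerm⟩ : Lit)})
    (h2 : Deriv Ψ (fun _ => True) c)
    (hb : (⟨false, .conc P vx⟩ : Lit) ∈ c) :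
    Deriv Ψ (fun _ => True) (ClauseSubst (σg g) (c.erase ⟨false, .conc P vx⟩)) := by
  have h := Deriv.res h1 h2 (Finset.mem_singleton_self _) hb (isMGU_g P g) trivial
  rwa [Finset.erase_singleton, Finset.empty_union] at h

lemma deriv_unit_res_ground {Ψ : Set Clause} (P : Bool × ℕ) (g : GTerm) {c : Clause}
    (h1 : Deriv Ψ (fun _ => True) {(⟨true, .conc P g.toTerm⟩ : Lit)})
    (h2 : Deriv Ψ (fun _ => True) c)
    (hb : (⟨false, .conc P g.toTerm⟩ : Lit) ∈ c) :
    Deriv Ψ (fun _ => True) (c.erase ⟨false, .conc P g.toTerm⟩) := by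
  have h := Deriv.res h1 h2 (Finset.mem_singleton_self _) hb (isMGU_id _) trivial
  rwa [Finset.erase_singleton, Finset.empty_union, clauseSubst_var] at h

lemma not_isI5_of {c : Clause} (h : ∀ r, (⟨false, .role r vx vy⟩ : Lit) ∉ c) :
    ¬ isI5 c := by
  rintro ⟨r, P, Q, rfl⟩
  exact h r (Finset.mem_insert_self _ _)

/-- The allowed clause set: presaturation minus I5-shaped clauses. -/
def Good (T : TBox) (C1 C2 : ℕ) : Set Clause :=
  {d | d ∈ presat (Translation T C1 C2) ∧ ¬ isI5 d}

/-- Every atom of the least Herbrand model has an I5-free derivation. -/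
lemma mem_deriv (hNF : NormalForm T) {a : GAtm} (ha : Mem T C1 a) :
    Deriv (Good T C1 C2) (fun _ => True) {(⟨true, a.toAtm⟩ : Lit)} ∧
    (∀ r t u, a = .role r t u → ∃ A B,
      (ELConcept.atom A, ELConcept.ex r (.atom B)) ∈ T ∧
      u = GTerm.app (false, (.atom A, .ex r (.atom B))) t ∧
      Deriv (Good T C1 C2) (fun _ => True) {(⟨true, Atm.conc (false, A) t.toTerm⟩ : Lit)}) := by
  induction ha with
  | base =>
    refine ⟨Deriv.hyp ⟨Or.inl mem_Phi_C1, not_isI5_of fun r => by simp [pcl]⟩, ?_⟩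
    intro r t u h; simp at h
  | @sub A B t hT hm ih =>
    have hgood : ({ncl false A vx, pcl false B vx} : Clause) ∈ Good T C1 C2 :=
      ⟨Or.inl (mem_Phi_false hT rfl), not_isI5_of fun r => by simp [ncl, pcl]⟩
    have h := deriv_unit_res (false, A) t ih.1 (Deriv.hyp hgood) (by simp [ncl])
    have e1 : (({ncl false A vx, pcl false B vx} : Clause).erase
        ⟨false, .conc (false, A) vx⟩) = {pcl false B vx} :=
      Finset.erase_insert (by simp [ncl, pcl])
    have e2 : ClauseSubst (σg t) ({pcl false B vx} : Clause)
        = {(⟨true, Atm.conc (false, B) t.toTerm⟩ : Lit)} := by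
      simp [ClauseSubst, Lit.subst, Atm.subst, pcl, vx, Term.subst, σg]
    rw [e1, e2] at h
    exact ⟨h, fun r t u hh => by simp at hh⟩
  | @cnj A1 A2 B t hT hm1 hm2 ih1 ih2 =>
    have hgood : ({ncl false A1 vx, ncl false A2 vx, pcl false B vx} : Clause) ∈ Good T C1 C2 :=
      ⟨Or.inl (mem_Phi_false hT rfl), not_isI5_of fun r => by simp [ncl, pcl]⟩
    have h := deriv_unit_res (false, A1) t ih1.1 (Deriv.hyp hgood) (by simp [ncl])
    by_cases hA : A1 = A2
    · subst hA
      have e1 : (({ncl false A1 vx, ncl false A1 vx, pcl false B vx} : Clause).erase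
          ⟨false, .conc (false, A1) vx⟩) = {pcl false B vx} := by
        rw [show ({ncl false A1 vx, ncl false A1 vx, pcl false B vx} : Clause)
            = {ncl false A1 vx, pcl false B vx} from Finset.insert_idem _ _]
        exact Finset.erase_insert (by simp [ncl, pcl])
      have e2 : ClauseSubst (σg t) ({pcl false B vx} : Clause)
          = {(⟨true, Atm.conc (false, B) t.toTerm⟩ : Lit)} := by
        simp [ClauseSubst, Lit.subst, Atm.subst, pcl, vx, Term.subst, σg]
      rw [e1, e2] at h
      exact ⟨h, fun r t u hh => by simp at hh⟩
    · have e1 : (({ncl false A1 vx, ncl false A2 vx, pcl false B vx} : Clause).erase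
          ⟨false, .conc (false, A1) vx⟩) = {ncl false A2 vx, pcl false B vx} :=
        Finset.erase_insert (by simp [ncl, pcl, hA])
      have e2 : ClauseSubst (σg t) ({ncl false A2 vx, pcl false B vx} : Clause)
          = {(⟨false, Atm.conc (false, A2) t.toTerm⟩ : Lit),
             (⟨true, Atm.conc (false, B) t.toTerm⟩ : Lit)} := by
        simp [ClauseSubst, Lit.subst, Atm.subst, ncl, pcl, vx, Term.subst, σg]
      rw [e1, e2] at h
      have h2 := deriv_unit_res_ground (false, A2) t ih2.1 h (Finset.mem_insert_self _ _)
      have e3 : (({(⟨false, Atm.conc (false, A2) t.toTerm⟩ : Lit),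
          (⟨true, Atm.conc (false, B) t.toTerm⟩ : Lit)} : Clause).erase
            ⟨false, Atm.conc (false, A2) t.toTerm⟩)
          = {(⟨true, Atm.conc (false, B) t.toTerm⟩ : Lit)} :=
        Finset.erase_insert (by simp)
      rw [e3] at h2
      exact ⟨h2, fun r t u hh => by simp at hh⟩
  | @exL r A B t u hT hr hc ihr ihc =>
    obtain ⟨A0, B0, hT0, hu, hD0⟩ := ihr.2 r t u rfl
    have hE : Entails T (.atom B0) (.atom A) := by
      have h' := (mem_G hc).1 (false, A) u rfl
      rw [hu] at h'
      simpa [baseC] using h'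
    have hAB : Entails T (.atom A0) (.atom B) := entails_step hT0 hT hE
    have hgood : ({ncl false A0 vx, pcl false B vx} : Clause) ∈ Good T C1 C2 :=
      ⟨Or.inr ⟨false, A0, B, rfl, centails_of_entails hNF hAB⟩,
       not_isI5_of fun r' => by simp [ncl, pcl]⟩
    have h := deriv_unit_res (false, A0) t hD0 (Deriv.hyp hgood) (by simp [ncl])
    have e1 : (({ncl false A0 vx, pcl false B vx} : Clause).erase
        ⟨false, .conc (false, A0) vx⟩) = {pcl false B vx} :=
      Finset.erase_insert (by simp [ncl, pcl])
    have e2 : ClauseSubst (σg t) ({pcl false B vx} : Clause)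
        = {(⟨true, Atm.conc (false, B) t.toTerm⟩ : Lit)} := by
      simp [ClauseSubst, Lit.subst, Atm.subst, pcl, vx, Term.subst, σg]
    rw [e1, e2] at h
    exact ⟨h, fun r' t' u' hh => by simp at hh⟩
  | @exR1 A r B t hT hm ih =>
    have hgood : ({ncl false A vx,
        prl r vx (.app (false, (.atom A, .ex r (.atom B))) vx)} : Clause) ∈ Good T C1 C2 :=
      ⟨Or.inl (mem_Phi_false hT (Set.mem_insert _ _)),
       not_isI5_of fun r' => by simp [ncl, prl]⟩
    have h := deriv_unit_res (false, A) t ih.1 (Deriv.hyp hgood) (by simp [ncl])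
    have e1 : (({ncl false A vx,
        prl r vx (.app (false, (.atom A, .ex r (.atom B))) vx)} : Clause).erase
        ⟨false, .conc (false, A) vx⟩)
        = {prl r vx (.app (false, (.atom A, .ex r (.atom B))) vx)} :=
      Finset.erase_insert (by simp [ncl, prl])
    have e2 : ClauseSubst (σg t)
        ({prl r vx (.app (false, (.atom A, .ex r (.atom B))) vx)} : Clause)
        = {(⟨true, Atm.role r t.toTerm
            (.app (false, (.atom A, .ex r (.atom B))) t.toTerm)⟩ : Lit)} := by
      simp [ClauseSubst, Lit.subst, Atm.subst, prl, vx, Term.subst, σg]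
    rw [e1, e2] at h
    refine ⟨h, ?_⟩
    rintro r' t' u' hh
    injection hh with h1 h2 h3
    subst h1; subst h2; subst h3
    exact ⟨A, B, hT, rfl, ih.1⟩
  | @exR2 A r B t hT hm ih =>
    have hgood : ({ncl false A vx,
        pcl false B (.app (false, (.atom A, .ex r (.atom B))) vx)} : Clause) ∈ Good T C1 C2 :=
      ⟨Or.inl (mem_Phi_false hT (Set.mem_insert_iff.2 (Or.inr rfl))),
       not_isI5_of fun r' => by simp [ncl, pcl]⟩
    have h := deriv_unit_res (false, A) t ih.1 (Deriv.hyp hgood) (by simp [ncl])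
    have e1 : (({ncl false A vx,
        pcl false B (.app (false, (.atom A, .ex r (.atom B))) vx)} : Clause).erase
        ⟨false, .conc (false, A) vx⟩)
        = {pcl false B (.app (false, (.atom A, .ex r (.atom B))) vx)} :=
      Finset.erase_insert (by simp [ncl, pcl])
    have e2 : ClauseSubst (σg t)
        ({pcl false B (.app (false, (.atom A, .ex r (.atom B))) vx)} : Clause)
        = {(⟨true, Atm.conc (false, B)
            (.app (false, (.atom A, .ex r (.atom B))) t.toTerm)⟩ : Lit)} := by
      simp [ClauseSubst, Lit.subst, Atm.subst, pcl, vx, Term.subst, σg]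
    rw [e1, e2] at h
    exact ⟨h, fun r' t' u' hh => by simp at hh⟩

end Stmt13c

section Stmt13d

variable {T : TBox} {C1 C2 : ℕ}

lemma term_ground {t : Term} (h : t.vars = ∅) : ∃ g : GTerm, g.toTerm = t := by
  induction t with
  | var x => exact absurd h (by simp [Term.vars])
  | sk0 => exact ⟨.sk0, rfl⟩
  | app f t ih =>
    obtain ⟨g, rfl⟩ := ih (by simpa [Term.vars] using h)
    exact ⟨.app f g, rfl⟩

lemma atm_ground {a : Atm} (h : a.vars = ∅) : ∃ g : GAtm, g.toAtm = a := by
  cases a with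
  | conc P t =>
    obtain ⟨g, rfl⟩ := term_ground (t := t) (by simpa [Atm.vars] using h)
    exact ⟨.conc P g, rfl⟩
  | role r t u =>
    rw [Atm.vars, Set.union_empty_iff] at h
    obtain ⟨g, rfl⟩ := term_ground h.1
    obtain ⟨g', rfl⟩ := term_ground h.2
    exact ⟨.role r g g', rfl⟩

end Stmt13d

/-- every clause of `PI^{g+}` is derivable from `Φ_p` without using
any clause of the shape `¬r(x,y) ∨ ¬A₁(y) ∨ A₂(x)`. -/
theorem pipos_derivable_without_I5
    (T : TBox) (C1 C2 : ℕ) (hNF : NormalForm T)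
    (hno : ¬ Entails T (.atom C1) (.atom C2)) :
    ∀ c ∈ PIpos Set.univ (Translation T C1 C2),
      Deriv {d | d ∈ presat (Translation T C1 C2) ∧ ¬ isI5 d} (fun _ => True) c := by
  intro c hc
  obtain ⟨⟨hent, hprime⟩, hg, hpos, -⟩ := hc
  obtain ⟨l, hl, hs⟩ := hent GTerm (herb {a | Mem T C1 a}) (herb_models hNF) (fun _ => GTerm.sk0)
  have hground : ∀ l' ∈ c, (Lit.atm l').vars = ∅ := by
    intro l' hl'
    rw [Set.eq_empty_iff_forall_notMem]
    intro x hx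
    have hx' : x ∈ ClauseVars c := ⟨l', hl', hx⟩
    rw [hg] at hx'
    exact hx'
  obtain ⟨g, hga⟩ := atm_ground (hground l hl)
  have hleq : l = ⟨true, g.toAtm⟩ := by
    obtain ⟨p, at'⟩ := l
    have := hpos _ hl
    simp only at this
    subst this
    rw [hga]
  have hgM : Mem T C1 g := by
    rw [hleq] at hs
    simp only [Lit.sat, if_true] at hs
    exact (gsat_herb _ _).1 ((sat_toAtm _ _ _).1 hs)
  have hu : CEntails (Translation T C1 C2) ({(⟨true, g.toAtm⟩ : Lit)} : Clause) := by
    intro α I hI ρ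
    refine ⟨⟨true, g.toAtm⟩, Finset.mem_singleton_self _, ?_⟩
    simp only [Lit.sat, if_true]
    exact (sat_toAtm _ _ _).2 (mem_sound hgM α I hI)
  have h1 : ClEntails ({(⟨true, g.toAtm⟩ : Lit)} : Clause) c := by
    intro α I hI ρ
    obtain ⟨l', hl', hs'⟩ := hI _ rfl ρ
    rw [Finset.mem_singleton] at hl'
    subst hl'
    refine ⟨l, hl, ?_⟩
    rw [hleq]
    exact hs'
  have h2 : ClEntails c ({(⟨true, g.toAtm⟩ : Lit)} : Clause) := hprime _ hu h1
  have hc_eq : c = {(⟨true, g.toAtm⟩ : Lit)} := by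
    apply Finset.eq_singleton_iff_unique_mem.2
    refine ⟨hleq ▸ hl, ?_⟩
    intro l' hl'
    by_contra hne
    obtain ⟨g', hg'a⟩ := atm_ground (hground l' hl')
    have hl'eq : l' = ⟨true, g'.toAtm⟩ := by
      obtain ⟨p, at'⟩ := l'
      have := hpos _ hl'
      simp only at this
      subst this
      rw [hg'a]
    have hmod : CModels (herb {g'}) {c} := by
      intro d hd ρ'
      rw [Set.mem_singleton_iff] at hd
      subst hd
      refine ⟨l', hl', ?_⟩
      rw [hl'eq]
      simp only [Lit.sat, if_true]
      exact (sat_toAtm _ _ _).2 ((gsat_herb _ _).2 rfl)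
    obtain ⟨l'', hl'', hs''⟩ := h2 GTerm (herb {g'}) hmod (fun _ => GTerm.sk0)
    rw [Finset.mem_singleton] at hl''
    subst hl''
    simp only [Lit.sat, if_true] at hs''
    have : g ∈ ({g'} : Set GAtm) := (gsat_herb _ _).1 ((sat_toAtm _ _ _).1 hs'')
    rw [Set.mem_singleton_iff] at this
    subst this
    exact hne hl'eq
  rw [hc_eq]
  exact (mem_deriv hNF hgM).1


end ELAbd
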